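/- arXiv:1907.00913 — 9 statements merged into one kernel-verified Lean document; each statement's English description precedes it below -/
import Mathlib

section
/- Let λ ∈ ℂ be given and suppose (μ, y) ∈ ℂ × ℂᵐ satisfies B(λ,μ)y = 0 with y normalized as cᵀy = 1. If the Jacobian matrix J(λ,μ,y) is invertible, then there exist functions g : ℂ → ℂ and Y : ℂ → ℂᵐ, both analytic at λ, such that g(λ) = μ, Y(λ) = y, and for all s in some neighborhood of λ one has B(s, g(s)) Y(s) = (B₁ + s B₂ + g(s) B₃) Y(s) = 0 and cᵀ Y(s) = 1. -/
/-!
Write `F(s, t, Y) = (B(s,t)Y, cᵀY)`. Its partial derivative in `(t, Y)` at `(λ, μ, y)` is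
`(dt, dY) ↦ (B(λ,μ) dY + dt B₃y, cᵀdY)`, i.e. the Jacobian `J` with the unknowns reordered, so it is
invertible. The analytic implicit function theorem, obtained from the analytic inverse function
theorem applied to `(s, z) ↦ (s, F(s, z))`, then solves `F(s, g s, Y s) = F(λ, μ, y) = (0, 1)`
analytically near `λ`.
-/

open Matrix Filter Topology
open scoped ContDiff

section AnalyticImplicitFunction

variable {𝕜 : Type*} [NontriviallyNormedField 𝕜]
  {E : Type*} [NormedAddCommGroup E] [NormedSpace 𝕜 E] [CompleteSpace E]
  {F : Type*} [NormedAddCommGroup F] [NormedSpace 𝕜 F] [CompleteSpace F]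
  {H : Type*} [NormedAddCommGroup H] [NormedSpace 𝕜 H]

theorem AnalyticAt.exists_analyticAt_rightInverse {f : E → H} {x : E} {e : E ≃L[𝕜] H}
    (hf : AnalyticAt 𝕜 f x) (hf' : HasFDerivAt f (e : E →L[𝕜] H) x) :
    ∃ g : H → E, AnalyticAt 𝕜 g (f x) ∧ g (f x) = x ∧ ∀ᶠ z in 𝓝 (f x), f (g z) = z := by
  have hstrict : HasStrictFDerivAt f (e : E →L[𝕜] H) x := hf'.fderiv ▸ hf.hasStrictFDerivAt
  refine ⟨hstrict.localInverse, ?_, hstrict.localInverse_apply_image,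
    hstrict.eventually_right_inverse⟩
  have hcoe : ⇑(hstrict.toOpenPartialHomeomorph f) = f := hstrict.toOpenPartialHomeomorph_coe
  have := (hstrict.toOpenPartialHomeomorph f).analyticAt_symm'
    hstrict.mem_toOpenPartialHomeomorph_source (hcoe ▸ hf) (by rw [hcoe, hf'.fderiv])
  rwa [hcoe] at this

theorem AnalyticAt.exists_analyticAt_implicitFunction {G : E × F → H} {p : E × F}
    {e : F ≃L[𝕜] H} (hG : AnalyticAt 𝕜 G p)
    (hG' : HasFDerivAt (fun z => G (p.1, z)) (e : F →L[𝕜] H) p.2) :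
    ∃ φ : E → F, AnalyticAt 𝕜 φ p.1 ∧ φ p.1 = p.2 ∧ ∀ᶠ x in 𝓝 p.1, G (x, φ x) = G p := by
  set G' := fderiv 𝕜 G p
  have hG'' : HasFDerivAt G G' p := hG.differentiableAt.hasFDerivAt
  have hpartial : G' ∘L ContinuousLinearMap.inr 𝕜 E F = e :=
    (hG''.comp p.2 (hasFDerivAt_prodMk_right p.1 p.2)).unique hG'
  have hΦ : HasFDerivAt (fun q => (q.1, G q))
      ((ContinuousLinearEquiv.refl 𝕜 E).skewProd e (G' ∘L ContinuousLinearMap.inl 𝕜 E F) :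
        E × F →L[𝕜] E × H) p := by
    refine (hasFDerivAt_fst.prodMk hG'').congr_fderiv ?_
    refine ContinuousLinearMap.ext fun v => ?_
    rw [ContinuousLinearEquiv.coe_coe, ContinuousLinearEquiv.skewProd_apply,
      ContinuousLinearMap.prod_apply, ← G'.comp_inl_add_comp_inr v, hpartial, add_comm]
    rfl
  obtain ⟨ψ, hψ, hψp, hψinv⟩ := (analyticAt_fst.prod hG).exists_analyticAt_rightInverse hΦ
  have hslice : AnalyticAt 𝕜 (fun x => (x, G p)) p.1 := analyticAt_id.prod analyticAt_const
  refine ⟨fun x => (ψ (x, G p)).2, analyticAt_snd.comp (hψ.comp (f := fun x => (x, G p)) hslice),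
    by simp [hψp], ?_⟩
  filter_upwards [hslice.continuousAt.eventually hψinv] with x hx
  obtain ⟨hfst, hG⟩ := Prod.ext_iff.mp hx
  have hψx : (x, (ψ (x, G p)).2) = ψ (x, G p) := Prod.ext hfst.symm rfl
  rw [hψx]
  exact hG

end AnalyticImplicitFunction

section Bordered

variable {𝕜 : Type*} [Field 𝕜] {n : Type*} [Fintype n]

theorem fromBlocks_replicateCol_replicateRow_mulVec_sumElim (A : Matrix n n 𝕜) (b c : n → 𝕜)
    (t : 𝕜) (Y : n → 𝕜) :
    fromBlocks A (replicateCol (Fin 1) b) (replicateRow (Fin 1) c) 0 *ᵥ Sum.elim Y (fun _ => t) =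
      Sum.elim (A *ᵥ Y + t • b) (fun _ => c ⬝ᵥ Y) := by
  rw [fromBlocks_mulVec]
  congr 1
  · ext i; simp [mulVec, dotProduct, mul_comm]
  · ext i; simp [mulVec, dotProduct]

variable [DecidableEq n]

def borderedLinearMap (A : Matrix n n 𝕜) (b c : n → 𝕜) : 𝕜 × (n → 𝕜) →ₗ[𝕜] (n → 𝕜) × 𝕜 :=
  (toLin' A ∘ₗ LinearMap.snd 𝕜 𝕜 (n → 𝕜) + (LinearMap.fst 𝕜 𝕜 (n → 𝕜)).smulRight b).prod
    (dotProductBilin 𝕜 𝕜 c ∘ₗ LinearMap.snd 𝕜 𝕜 (n → 𝕜))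

@[simp]
theorem borderedLinearMap_apply (A : Matrix n n 𝕜) (b c : n → 𝕜) (v : 𝕜 × (n → 𝕜)) :
    borderedLinearMap A b c v = (A *ᵥ v.2 + v.1 • b, c ⬝ᵥ v.2) := rfl

theorem borderedLinearMap_bijective {A : Matrix n n 𝕜} {b c : n → 𝕜}
    (h : IsUnit (fromBlocks A (replicateCol (Fin 1) b) (replicateRow (Fin 1) c) 0)) :
    Function.Bijective (borderedLinearMap A b c) := by
  have hinj : Function.Injective (borderedLinearMap A b c) := by
    rw [← LinearMap.ker_eq_bot, LinearMap.ker_eq_bot']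
    rintro ⟨t, Y⟩ hv
    simp only [borderedLinearMap_apply, Prod.mk_eq_zero] at hv
    have hzero : Sum.elim Y (fun _ : Fin 1 => t) = 0 := by
      refine mulVec_injective_iff_isUnit.mpr h ?_
      rw [fromBlocks_replicateCol_replicateRow_mulVec_sumElim, hv.1, hv.2, mulVec_zero]
      exact Sum.elim_zero_zero
    exact Prod.ext (congrFun hzero (Sum.inr 0)) (funext fun i => congrFun hzero (Sum.inl i))
  refine ⟨hinj, (LinearMap.injective_iff_surjective_of_finrank_eq_finrank ?_).mp hinj⟩
  simp [add_comm]

end Bordered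

section Pencil

variable {𝕜 : Type*} [NontriviallyNormedField 𝕜] {n : Type*} [Fintype n]
  (B₁ B₂ B₃ : Matrix n n 𝕜) (c : n → 𝕜)

def pencilMap (p : 𝕜 × 𝕜 × (n → 𝕜)) : (n → 𝕜) × 𝕜 :=
  ((B₁ + p.1 • B₂ + p.2.1 • B₃) *ᵥ p.2.2, c ⬝ᵥ p.2.2)

theorem analyticAt_pencilMap (p : 𝕜 × 𝕜 × (n → 𝕜)) : AnalyticAt 𝕜 (pencilMap B₁ B₂ B₃ c) p := by
  refine ContDiffAt.analyticAt (ContDiff.contDiffAt (n := ω) ?_)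
  unfold pencilMap mulVec dotProduct
  simp only [Matrix.add_apply, Matrix.smul_apply, smul_eq_mul]
  fun_prop

theorem hasFDerivAt_pencilMap_right [CompleteSpace 𝕜] [DecidableEq n] (s : 𝕜) (q : 𝕜 × (n → 𝕜)) :
    HasFDerivAt (fun q => pencilMap B₁ B₂ B₃ c (s, q))
      (borderedLinearMap (B₁ + s • B₂ + q.1 • B₃) (B₃ *ᵥ q.2) c).toContinuousLinearMap q := by
  have hmul (A : Matrix n n 𝕜) : HasFDerivAt (fun q : 𝕜 × (n → 𝕜) => A *ᵥ q.2)
      (toLin' A ∘ₗ LinearMap.snd 𝕜 𝕜 (n → 𝕜)).toContinuousLinearMap q :=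
    (toLin' A ∘ₗ LinearMap.snd 𝕜 𝕜 (n → 𝕜)).toContinuousLinearMap.hasFDerivAt
  have hdot : HasFDerivAt (fun q : 𝕜 × (n → 𝕜) => c ⬝ᵥ q.2)
      (dotProductBilin 𝕜 𝕜 c ∘ₗ LinearMap.snd 𝕜 𝕜 (n → 𝕜)).toContinuousLinearMap q :=
    (dotProductBilin 𝕜 𝕜 c ∘ₗ LinearMap.snd 𝕜 𝕜 (n → 𝕜)).toContinuousLinearMap.hasFDerivAt
  have hsplit : (fun q => pencilMap B₁ B₂ B₃ c (s, q)) =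
      fun q => ((B₁ + s • B₂) *ᵥ q.2 + q.1 • (B₃ *ᵥ q.2), c ⬝ᵥ q.2) := by
    funext q; simp [pencilMap, add_mulVec, smul_mulVec]
  rw [hsplit]
  refine (((hmul _).add (hasFDerivAt_fst.smul (hmul B₃))).prodMk hdot).congr_fderiv ?_
  ext v <;> simp [add_mulVec, smul_mulVec, add_assoc]

end Pencil

/-- **Existence of implicit functions.**
Let `λ ∈ ℂ` be given and suppose `(μ, y)` satisfies `B(λ,μ)y = 0` with `y` normalized as
`cᵀy = 1`.  If the Jacobian `J(λ,μ,y) = [[B(λ,μ), B₃y],[cᵀ, 0]]` is invertible, then there exist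
functions `g : ℂ → ℂ` and `Y : ℂ → ℂᵐ`, analytic at `λ`, with `g(λ) = μ`, `Y(λ) = y`, and
`B(s, g(s)) Y(s) = 0`, `cᵀ Y(s) = 1` for all `s` in a neighborhood of `λ`. -/
theorem nonlinearization_existence
    (m : ℕ) (B₁ B₂ B₃ : Matrix (Fin m) (Fin m) ℂ) (c : Fin m → ℂ)
    (lam μ : ℂ) (y : Fin m → ℂ)
    (hB : (B₁ + lam • B₂ + μ • B₃) *ᵥ y = 0)
    (hc : c ⬝ᵥ y = 1)
    (hJ : IsUnit (Matrix.fromBlocks (B₁ + lam • B₂ + μ • B₃)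
        (Matrix.replicateCol (Fin 1) (B₃ *ᵥ y)) (Matrix.replicateRow (Fin 1) c) 0)) :
    ∃ (g : ℂ → ℂ) (Y : ℂ → (Fin m → ℂ)),
      AnalyticAt ℂ g lam ∧ AnalyticAt ℂ Y lam ∧
      g lam = μ ∧ Y lam = y ∧
      ∀ᶠ s in nhds lam,
        (B₁ + s • B₂ + g s • B₃) *ᵥ (Y s) = 0 ∧ c ⬝ᵥ (Y s) = 1 := by
  obtain ⟨φ, hφ, hφlam, hφeq⟩ :=
    (analyticAt_pencilMap B₁ B₂ B₃ c (lam, μ, y)).exists_analyticAt_implicitFunction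
      (e := (LinearEquiv.ofBijective _ (borderedLinearMap_bijective hJ)).toContinuousLinearEquiv)
      (hasFDerivAt_pencilMap_right B₁ B₂ B₃ c lam (μ, y))
  have hbase : pencilMap B₁ B₂ B₃ c (lam, μ, y) = (0, 1) := Prod.ext hB hc
  refine ⟨fun s => (φ s).1, fun s => (φ s).2, analyticAt_fst.comp hφ, analyticAt_snd.comp hφ,
    congrArg Prod.fst hφlam, congrArg Prod.snd hφlam, ?_⟩
  filter_upwards [hφeq] with s hs
  rw [hbase] at hs
  exact Prod.ext_iff.mp hs
end

section
/- Let λ ∈ ℂ be given and assume that c is not orthogonal to any eigenvector of the generalized eigenvalue problem −(B₁ + λB₂)v = ν B₃ v, i.e. for every ν ∈ ℂ and every nonzero v ∈ ℂᵐ with (B₁ + λB₂ + νB₃)v = 0 one has cᵀv ≠ 0. Suppose (μ, y) satisfies B(λ,μ)y = 0 with cᵀy = 1. Then the Jacobian J(λ,μ,y) is singular (not invertible) if and only if there exists a vector u ∈ ℂᵐ such that B(λ,μ)u + B₃y = 0 (i.e. there exists a Jordan chain of length at least two for this eigenpair). -/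
/-!
A kernel vector `(v, t)` of the bordered matrix `[[M, b], [cᵀ, 0]]` satisfies `M v + t b = 0` and
`cᵀ v = 0`. If `ker M` meets `c^⊥` only in `0`, then `t ≠ 0` and `t⁻¹ v` solves `M u + b = 0`.
Conversely, a solution `u` together with a vector `y ∈ ker M` normalised by `cᵀ y = 1` gives
the kernel vector `(u - (cᵀ u) y, 1)`.
-/

open Matrix

namespace Matrix

variable {K n ι : Type*} [Field K] [Fintype n] [Fintype ι] [Unique ι]

theorem fromBlocks_replicateCol_replicateRow_mulVec_sumElim (M : Matrix n n K) (b c v : n → K)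
    (t : K) :
    fromBlocks M (replicateCol ι b) (replicateRow ι c) 0 *ᵥ Sum.elim v (fun _ => t) =
      Sum.elim (M *ᵥ v + t • b) (fun _ => c ⬝ᵥ v) := by
  rw [fromBlocks_mulVec]
  ext (i | i) <;>
    simp [mulVec, dotProduct, replicateCol, replicateRow, mul_comm]

theorem exists_mulVec_add_eq_zero_of_fromBlocks_mulVec_eq_zero {M : Matrix n n K} {b c : n → K}
    (hker : ∀ v, M *ᵥ v = 0 → c ⬝ᵥ v = 0 → v = 0) {x : n ⊕ ι → K} (hx : x ≠ 0)
    (hMx : fromBlocks M (replicateCol ι b) (replicateRow ι c) 0 *ᵥ x = 0) :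
    ∃ u, M *ᵥ u + b = 0 := by
  set v : n → K := x ∘ Sum.inl
  set t : K := x (Sum.inr default)
  have hx_eq : x = Sum.elim v (fun _ => t) := by
    ext (i | i)
    · rfl
    · simp [t, Unique.eq_default i]
  rw [hx_eq, fromBlocks_replicateCol_replicateRow_mulVec_sumElim] at hMx
  have hMv : M *ᵥ v + t • b = 0 := funext fun i => congrFun hMx (Sum.inl i)
  have hcv : c ⬝ᵥ v = 0 := congrFun hMx (Sum.inr default)
  have ht : t ≠ 0 := by
    rintro ht
    rw [ht, zero_smul, add_zero] at hMv
    exact hx (by rw [hx_eq, hker v hMv hcv, ht]; exact Sum.elim_zero_zero)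
  refine ⟨t⁻¹ • v, ?_⟩
  rw [mulVec_smul, ← smul_right_inj ht, smul_add, smul_inv_smul₀ ht, smul_zero]
  exact hMv

theorem fromBlocks_replicateCol_replicateRow_mulVec_sumElim_sub_eq_zero
    {M : Matrix n n K} {b c y u : n → K}
    (hy : M *ᵥ y = 0) (hcy : c ⬝ᵥ y = 1) (hu : M *ᵥ u + b = 0) :
    fromBlocks M (replicateCol ι b) (replicateRow ι c) 0 *ᵥ
      Sum.elim (u - (c ⬝ᵥ u) • y) (fun _ => 1) = 0 := by
  rw [fromBlocks_replicateCol_replicateRow_mulVec_sumElim, ← Sum.elim_zero_zero]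
  congr 1
  · rw [mulVec_sub, mulVec_smul, hy, smul_zero, sub_zero, one_smul, hu]
  · ext
    simp [dotProduct_sub, hcy]

theorem not_isUnit_fromBlocks_replicateCol_replicateRow_iff [DecidableEq n] [DecidableEq ι]
    {M : Matrix n n K} {b c y : n → K} (hker : ∀ v, M *ᵥ v = 0 → c ⬝ᵥ v = 0 → v = 0)
    (hy : M *ᵥ y = 0) (hcy : c ⬝ᵥ y = 1) :
    ¬ IsUnit (fromBlocks M (replicateCol ι b) (replicateRow ι c) 0) ↔ ∃ u, M *ᵥ u + b = 0 := by
  rw [isUnit_iff_isUnit_det, isUnit_iff_ne_zero, not_not, ← exists_mulVec_eq_zero_iff]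
  constructor
  · rintro ⟨x, hx, hMx⟩
    exact exists_mulVec_add_eq_zero_of_fromBlocks_mulVec_eq_zero hker hx hMx
  · rintro ⟨u, hu⟩
    refine ⟨_, fun h => ?_,
      fromBlocks_replicateCol_replicateRow_mulVec_sumElim_sub_eq_zero hy hcy hu⟩
    simpa using congrFun h (Sum.inr default)

end Matrix

/-- **Singularity of the Jacobian and Jordan structure.**
Let `λ ∈ ℂ` be given and assume `c` is not orthogonal to any eigenvector of the GEP
`−(B₁ + λB₂)v = ν B₃ v`.  Suppose `(μ, y)` satisfies `B(λ,μ)y = 0` with `cᵀy = 1`.  Then the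
Jacobian `J(λ,μ,y)` is singular if and only if there exists `u` with `B(λ,μ)u + B₃y = 0`,
i.e. a Jordan chain of length at least two exists for the eigenpair `(μ, y)`. -/
theorem jacobian_singular_iff_jordan_chain
    (m : ℕ) (B₁ B₂ B₃ : Matrix (Fin m) (Fin m) ℂ) (c : Fin m → ℂ)
    (lam μ : ℂ) (y : Fin m → ℂ)
    (horth : ∀ (ν : ℂ) (v : Fin m → ℂ), v ≠ 0 →
      (B₁ + lam • B₂ + ν • B₃) *ᵥ v = 0 → c ⬝ᵥ v ≠ 0)
    (hB : (B₁ + lam • B₂ + μ • B₃) *ᵥ y = 0)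
    (hc : c ⬝ᵥ y = 1) :
    ¬ IsUnit (Matrix.fromBlocks (B₁ + lam • B₂ + μ • B₃)
        (Matrix.replicateCol (Fin 1) (B₃ *ᵥ y)) (Matrix.replicateRow (Fin 1) c) 0)
    ↔
    ∃ u : Fin m → ℂ, (B₁ + lam • B₂ + μ • B₃) *ᵥ u + B₃ *ᵥ y = 0 :=
  not_isUnit_fromBlocks_replicateCol_replicateRow_iff
    (fun v hv hcv => by_contra fun hv0 => horth μ v hv0 hv hcv) hB hc
end

section
/- Let λ ∈ ℂ be given. Assume that μ ∈ ℂ is a simple eigenvalue of the generalized eigenvalue problem −(B₁ + λB₂)y = μ B₃ y, i.e. μ is a root of multiplicity exactly one of the polynomial z ↦ det(B₁ + λB₂ + z B₃), and let y ∈ ℂᵐ be a corresponding eigenvector (so B(λ,μ)y = 0, y ≠ 0) normalized as cᵀy = 1. Then the Jacobian J(λ,μ,y) is invertible. -/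
/-!
Replace `μ` by an indeterminate `z` in the Jacobian, giving a polynomial bordered matrix `M(z)`.
Since `B(λ,z) y = (z - μ) B₃ y` and `cᵀy = 1`, multiplying `M(z)` on the right by
`[[I, y], [0, -(z - μ)]]` gives the block lower triangular matrix `[[B(λ,z), 0], [cᵀ, 1]]`, so
`(z - μ) det M(z) = -det B(λ,z)`. As `μ` is a simple root of `det B(λ,z)`, it is not a root of
`det M(z)`, i.e. `det J(λ,μ,y) ≠ 0`.
-/
open Matrix Polynomial

theorem det_fromBlocks_replicateCol_replicateRow_zero_mul {R n : Type*} [CommRing R] [Fintype n]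
    [DecidableEq n] {A : Matrix n n R} {v c y : n → R} {a : R}
    (hAy : A *ᵥ y = a • v) (hcy : c ⬝ᵥ y = 1) :
    a * (fromBlocks A (replicateCol (Fin 1) v) (replicateRow (Fin 1) c) 0).det = -A.det := by
  have hprod : fromBlocks A (replicateCol (Fin 1) v) (replicateRow (Fin 1) c) 0 *
      fromBlocks 1 (replicateCol (Fin 1) y) 0 (-a • 1) =
        fromBlocks A 0 (replicateRow (Fin 1) c) 1 := by
    rw [fromBlocks_multiply]
    congr 1
    · simp
    · ext i j; simp [← replicateCol_mulVec, hAy]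
    · simp
    · ext i j; simp [replicateRow_mul_replicateCol, hcy, one_apply, Subsingleton.elim i j]
  have := congrArg det hprod
  rw [det_mul, det_fromBlocks_zero₂₁, det_fromBlocks_zero₁₂] at this
  simp only [det_one, det_smul, Fintype.card_fin, pow_one, mul_one, one_mul] at this
  linear_combination -this

theorem eval_ne_zero_of_rootMultiplicity_X_sub_C_mul_eq_one {R : Type*} [CommRing R] [IsDomain R]
    {p : R[X]} {a : R} (h : rootMultiplicity a ((X - C a) * p) = 1) : p.eval a ≠ 0 := by
  have hp : (X - C a) * p ≠ 0 := by
    rintro h0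
    simp [h0] at h
  rw [rootMultiplicity_mul hp, rootMultiplicity_X_sub_C_self, add_eq_left] at h
  exact fun hroot => (rootMultiplicity_pos (right_ne_zero_of_mul hp)).mpr hroot |>.ne' h

theorem map_C_add_X_smul_map_C_mulVec {R n : Type*} [CommRing R] [Fintype n]
    {A B : Matrix n n R} {μ : R} {y : n → R} (h : (A + μ • B) *ᵥ y = 0) :
    (A.map C + (X : R[X]) • B.map C) *ᵥ (C ∘ y) = (X - C μ) • (C ∘ (B *ᵥ y)) := by
  have hsplit :
      A.map C + (X : R[X]) • B.map C = (A + μ • B).map C + (X - C μ) • B.map C := by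
    ext i j : 1
    simp only [Matrix.add_apply, map_apply, Matrix.smul_apply, smul_eq_mul, map_add, map_mul]
    ring
  ext i
  rw [hsplit, add_mulVec, smul_mulVec, Pi.add_apply, Pi.smul_apply, ← RingHom.map_mulVec,
    ← RingHom.map_mulVec, h]
  simp

theorem jacobian_nonsingular_of_simple_eigenvalue_general
    (m : ℕ) (B₁ B₂ B₃ : Matrix (Fin m) (Fin m) ℂ) (c : Fin m → ℂ)
    (lam μ : ℂ) (y : Fin m → ℂ)
    (hsimple : Polynomial.rootMultiplicity μ
      (Matrix.det (B₁.map Polynomial.C + (Polynomial.C lam : Polynomial ℂ) • B₂.map Polynomial.C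
        + (Polynomial.X : Polynomial ℂ) • B₃.map Polynomial.C)) = 1)
    (hB : (B₁ + lam • B₂ + μ • B₃) *ᵥ y = 0)
    (hc : c ⬝ᵥ y = 1) :
    IsUnit (Matrix.fromBlocks (B₁ + lam • B₂ + μ • B₃)
        (Matrix.replicateCol (Fin 1) (B₃ *ᵥ y)) (Matrix.replicateRow (Fin 1) c) 0) := by
  set P : Matrix (Fin m) (Fin m) ℂ[X] := (B₁ + lam • B₂).map C + (X : ℂ[X]) • B₃.map C
  have hP : B₁.map C + C lam • B₂.map C + (X : ℂ[X]) • B₃.map C = P := by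
    ext i j : 1
    simp [P]
  set M :=
    fromBlocks P (replicateCol (Fin 1) (C ∘ (B₃ *ᵥ y))) (replicateRow (Fin 1) (C ∘ c)) 0
  have hdet : (X - C μ) * M.det = -P.det :=
    det_fromBlocks_replicateCol_replicateRow_zero_mul (map_C_add_X_smul_map_C_mulVec hB)
      (by rw [← RingHom.map_dotProduct, hc, map_one])
  have hJ : fromBlocks (B₁ + lam • B₂ + μ • B₃) (replicateCol (Fin 1) (B₃ *ᵥ y))
      (replicateRow (Fin 1) c) 0 = M.map (eval μ) := by
    ext (i | i) (j | j) <;> simp [M, P, mul_comm μ]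
  rw [isUnit_iff_isUnit_det, hJ, isUnit_iff_ne_zero]
  change ((evalRingHom μ).mapMatrix M).det ≠ 0
  rw [← RingHom.map_det, coe_evalRingHom, ← neg_ne_zero, ← eval_neg]
  apply eval_ne_zero_of_rootMultiplicity_X_sub_C_mul_eq_one
  rwa [mul_neg, hdet, neg_neg, ← hP]

/-- **Simple eigenvalues give a nonsingular Jacobian.**
Let `λ ∈ ℂ` be given.  Assume `μ` is a simple eigenvalue of the GEP `−(B₁ + λB₂)y = μB₃y`,
i.e. `μ` is a root of multiplicity exactly one of `z ↦ det(B₁ + λB₂ + zB₃)`, and let `y` be a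
corresponding eigenvector normalized as `cᵀy = 1`.  Then the Jacobian `J(λ,μ,y)` is invertible. -/
theorem jacobian_nonsingular_of_simple_eigenvalue
    (m : ℕ) (B₁ B₂ B₃ : Matrix (Fin m) (Fin m) ℂ) (c : Fin m → ℂ)
    (lam μ : ℂ) (y : Fin m → ℂ)
    (hsimple : Polynomial.rootMultiplicity μ
      (Matrix.det (B₁.map Polynomial.C + (Polynomial.C lam : Polynomial ℂ) • B₂.map Polynomial.C
        + (Polynomial.X : Polynomial ℂ) • B₃.map Polynomial.C)) = 1)
    (hB : (B₁ + lam • B₂ + μ • B₃) *ᵥ y = 0)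
    (hy : y ≠ 0)
    (hc : c ⬝ᵥ y = 1) :
    IsUnit (Matrix.fromBlocks (B₁ + lam • B₂ + μ • B₃)
        (Matrix.replicateCol (Fin 1) (B₃ *ᵥ y)) (Matrix.replicateRow (Fin 1) c) 0) :=
  jacobian_nonsingular_of_simple_eigenvalue_general m B₁ B₂ B₃ c lam μ y hsimple hB hc
end

section
/- Let B₁ = [[0,0],[0,−1]], B₂ = [[0,1],[1,0]], B₃ = [[−1,0],[0,0]] ∈ ℂ^{2×2}. If y ∈ ℂ² is a nonzero vector and λ, μ ∈ ℂ satisfy (B₁ + λB₂ + μB₃)y = 0, then μ = λ², the components of y satisfy y₂ = λ y₁, and y₁ ≠ 0. Consequently, for any A₁,A₂,A₃ ∈ ℂ^{n×n} and x ∈ ℂⁿ, the quadruple (λ,x,μ,y) with y ≠ 0 solves the two-parameter eigenvalue problem A(λ,μ)x = 0, B(λ,μ)y = 0 if and only if μ = λ², y₂ = λy₁ with y₁ ≠ 0, and x satisfies the quadratic eigenvalue problem A₁x + λA₂x + λ²A₃x = 0. -/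
open Matrix

lemma Bpart (lam μ : ℂ) (y : Fin 2 → ℂ) (hy : y ≠ 0) :
    ((!![0, 0; 0, -1] : Matrix (Fin 2) (Fin 2) ℂ)
        + lam • !![0, 1; 1, 0] + μ • !![-1, 0; 0, 0]) *ᵥ y = 0 ↔
      μ = lam ^ 2 ∧ y 1 = lam * y 0 ∧ y 0 ≠ 0 := by
  constructor
  · intro h
    have h0 := congrFun h 0
    have h1 := congrFun h 1
    simp [mulVec, dotProduct, Fin.sum_univ_two, Matrix.add_apply, Matrix.smul_apply] at h0 h1
    -- h0 : lam * y 1 - μ * y 0 = 0 (in some form), h1 : lam * y 0 - y 1 = 0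
    have hy1 : y 1 = lam * y 0 := by linear_combination -h1
    have hy0 : y 0 ≠ 0 := by
      intro h00
      apply hy
      funext i
      fin_cases i
      · exact h00
      · simp [hy1, h00]
    refine ⟨?_, hy1, hy0⟩
    have : μ * y 0 = lam ^ 2 * y 0 := by
      rw [pow_two]
      linear_combination -h0 - lam * h1
    exact mul_right_cancel₀ hy0 this
  · rintro ⟨rfl, hy1, hy0⟩
    funext i
    fin_cases i <;>
      simp [mulVec, dotProduct, Fin.sum_univ_two, Matrix.add_apply, Matrix.smul_apply, hy1] <;>
      ring

/-- **Nonlinearization leading to a quadratic eigenvalue problem.** -/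
theorem nonlinearization_quadratic
    (n : ℕ) (A₁ A₂ A₃ : Matrix (Fin n) (Fin n) ℂ)
    (lam μ : ℂ) (x : Fin n → ℂ) (y : Fin 2 → ℂ) (hy : y ≠ 0) :
    (((!![0, 0; 0, -1] : Matrix (Fin 2) (Fin 2) ℂ)
        + lam • !![0, 1; 1, 0] + μ • !![-1, 0; 0, 0]) *ᵥ y = 0 →
      μ = lam ^ 2 ∧ y 1 = lam * y 0 ∧ y 0 ≠ 0)
    ∧
    (((A₁ + lam • A₂ + μ • A₃) *ᵥ x = 0 ∧
      ((!![0, 0; 0, -1] : Matrix (Fin 2) (Fin 2) ℂ)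
        + lam • !![0, 1; 1, 0] + μ • !![-1, 0; 0, 0]) *ᵥ y = 0)
      ↔
      (μ = lam ^ 2 ∧ y 1 = lam * y 0 ∧ y 0 ≠ 0 ∧
        A₁ *ᵥ x + lam • (A₂ *ᵥ x) + lam ^ 2 • (A₃ *ᵥ x) = 0)) := by
  have hB := Bpart lam μ y hy
  refine ⟨hB.mp, ?_⟩
  constructor
  · rintro ⟨hA, hBy⟩
    obtain ⟨hμ, hy1, hy0⟩ := hB.mp hBy
    refine ⟨hμ, hy1, hy0, ?_⟩
    subst hμ
    simpa [add_mulVec, smul_mulVec] using hA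
  · rintro ⟨hμ, hy1, hy0, hA⟩
    refine ⟨?_, hB.mpr ⟨hμ, hy1, hy0⟩⟩
    subst hμ
    simpa [add_mulVec, smul_mulVec] using hA
end

section
/- Let A₁,A₂,A₃ ∈ ℂ^{n×n}, let b,c,e,f ∈ ℂ, and define p(λ) := (b + λe)(c + λf). Set B₁ = [[0,b],[c,0]], B₂ = [[0,e],[f,0]], B₃ = I₂. Fix λ ∈ ℂ and let s₁, s₂ ∈ ℂ be square roots with s₁² = b + λe and s₂² = c + λf, not both zero, and set μ := s₁ s₂. If x ∈ ℂⁿ satisfies (A₁ + λA₂ + μA₃)x = 0, then μ² = p(λ) and the quadruple (λ, x, μ, y) with y := (s₁, −s₂) ∈ ℂ², y ≠ 0, solves the two-parameter eigenvalue problem: (A₁ + λA₂ + μA₃)x = 0 and (B₁ + λB₂ + μB₃)y = 0. -/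
open Matrix

/-- **Two-parameterization of an algebraic NEP.**
With `p(λ) = (b + λe)(c + λf)`, `B₁ = [[0,b],[c,0]]`, `B₂ = [[0,e],[f,0]]`, `B₃ = I₂`,
square roots `s₁² = b + λe`, `s₂² = c + λf` (not both zero) and `μ := s₁s₂`:  if `x` solves
`(A₁ + λA₂ + μA₃)x = 0`, then `μ² = p(λ)` and `(λ, x, μ, y)` with `y = (s₁, −s₂) ≠ 0` solves
the two-parameter eigenvalue problem. -/
theorem two_parameterization_of_algebraic_nep
    (n : ℕ) (A₁ A₂ A₃ : Matrix (Fin n) (Fin n) ℂ)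
    (b c e f lam s₁ s₂ : ℂ)
    (hs₁ : s₁ ^ 2 = b + lam * e) (hs₂ : s₂ ^ 2 = c + lam * f)
    (hs : ¬ (s₁ = 0 ∧ s₂ = 0))
    (x : Fin n → ℂ)
    (hx : (A₁ + lam • A₂ + (s₁ * s₂) • A₃) *ᵥ x = 0) :
    (s₁ * s₂) ^ 2 = (b + lam * e) * (c + lam * f) ∧
    (![s₁, -s₂] : Fin 2 → ℂ) ≠ 0 ∧
    (A₁ + lam • A₂ + (s₁ * s₂) • A₃) *ᵥ x = 0 ∧
    ((!![0, b; c, 0] : Matrix (Fin 2) (Fin 2) ℂ)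
      + lam • !![0, e; f, 0] + (s₁ * s₂) • (1 : Matrix (Fin 2) (Fin 2) ℂ)) *ᵥ ![s₁, -s₂] = 0 := by
  refine ⟨by rw [mul_pow, hs₁, hs₂], ?_, hx, ?_⟩
  · intro h
    apply hs
    constructor
    · have := congrFun h 0; simpa using this
    · have := congrFun h 1
      simp at this
      simpa using this
  · funext i
    fin_cases i <;>
      simp [mulVec, dotProduct, Fin.sum_univ_two, Matrix.one_apply] <;>
      (first | linear_combination s₂ * hs₁ | linear_combination (-s₁) * hs₂)
end

section
/- Let A₁,A₂,A₃ ∈ ℂ^{n×n}, let b,c,e,f ∈ ℂ, fix λ ∈ ℂ, and let s₁, s₂ ∈ ℂ satisfy s₁² = b + λe and s₂² = c + λf. Set μ := s₁ s₂. If x ∈ ℂⁿ satisfies (A₁ + λA₂ + μA₃)x = 0, then the vector z := (s₁·x, −s₂·x) ∈ ℂ^{2n} satisfies the generalized eigenvalue problem [[A₁, −bA₃],[−cA₃, A₁]] z = λ [[−A₂, eA₃],[fA₃, −A₂]] z, where the matrices are 2×2 block matrices with n×n blocks. -/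
open Matrix

/-- **Linearization of the algebraic NEP via operator determinants.**
With `s₁² = b + λe`, `s₂² = c + λf` and `μ := s₁s₂`:  if `(A₁ + λA₂ + μA₃)x = 0`, then
`z := (s₁x, −s₂x)` satisfies the generalized eigenvalue problem
`[[A₁,−bA₃],[−cA₃,A₁]] z = λ [[−A₂,eA₃],[fA₃,−A₂]] z`. -/
theorem algebraic_nep_linearization
    (n : ℕ) (A₁ A₂ A₃ : Matrix (Fin n) (Fin n) ℂ)
    (b c e f lam s₁ s₂ : ℂ)
    (hs₁ : s₁ ^ 2 = b + lam * e) (hs₂ : s₂ ^ 2 = c + lam * f)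
    (x : Fin n → ℂ)
    (hx : (A₁ + lam • A₂ + (s₁ * s₂) • A₃) *ᵥ x = 0) :
    (Matrix.fromBlocks A₁ (-(b • A₃)) (-(c • A₃)) A₁)
        *ᵥ (Sum.elim (fun i => s₁ * x i) (fun i => -(s₂ * x i)))
      = lam • ((Matrix.fromBlocks (-A₂) (e • A₃) (f • A₃) (-A₂))
        *ᵥ (Sum.elim (fun i => s₁ * x i) (fun i => -(s₂ * x i)))) := by
  have hx' : ∀ i, (A₁ *ᵥ x) i + lam * (A₂ *ᵥ x) i + (s₁ * s₂) * (A₃ *ᵥ x) i = 0 := by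
    intro i
    have := congrFun hx i
    simpa [add_mulVec, smul_mulVec] using this
  have key : ∀ (M : Matrix (Fin n) (Fin n) ℂ) (t : ℂ) (i : Fin n),
      (M *ᵥ fun j => t * x j) i = t * (M *ᵥ x) i := by
    intro M t i
    simp only [mulVec, dotProduct, Finset.mul_sum]
    congr 1; funext j; ring
  funext i
  cases i with
  | inl i =>
      simp only [fromBlocks_mulVec, Sum.elim_inl, Pi.add_apply, Pi.smul_apply,
        neg_mulVec, Pi.neg_apply, smul_eq_mul, neg_mul, mulVec_neg,
        smul_mulVec, Sum.elim_comp_inl, Sum.elim_comp_inr]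
      simp only [show (fun j => -(s₂ * x j)) = fun j => (-s₂) * x j from by
        funext j; ring]
      rw [key A₁ s₁ i, key A₃ (-s₂) i, key A₂ s₁ i]
      linear_combination s₁ * hx' i - s₂ * (A₃ *ᵥ x) i * hs₁
  | inr i =>
      simp only [fromBlocks_mulVec, Sum.elim_inr, Pi.add_apply, Pi.smul_apply,
        neg_mulVec, Pi.neg_apply, smul_eq_mul, neg_mul, mulVec_neg,
        smul_mulVec, Sum.elim_comp_inl, Sum.elim_comp_inr]
      simp only [show (fun j => -(s₂ * x j)) = fun j => (-s₂) * x j from by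
        funext j; ring]
      rw [key A₁ (-s₂) i, key A₃ s₁ i, key A₂ (-s₂) i]
      linear_combination (-s₂) * hx' i + s₁ * (A₃ *ᵥ x) i * hs₂
end

section
/- Let λ ∈ ℂ and suppose g : ℂ → ℂ and Y : ℂ → ℂᵐ are analytic at λ and satisfy B(s, g(s)) Y(s) = 0 for all s in a neighborhood of λ. Write y := Y(λ). If w ∈ ℂᵐ satisfies wᴴ B(λ, g(λ)) = 0 (w is a left eigenvector) and wᴴ B₃ y ≠ 0, then the derivative of g at λ is g'(λ) = −(wᴴ B₂ y)/(wᴴ B₃ y). -/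
open Matrix

/-- **Closed form for `g'(λ)` via the left eigenvector.**
Suppose `g : ℂ → ℂ` and `Y : ℂ → ℂᵐ` are analytic at `λ` and satisfy `B(s,g(s))Y(s) = 0` near
`λ`, and write `y := Y(λ)`.  If `wᴴB(λ,g(λ)) = 0` and `wᴴB₃y ≠ 0`, then
`g'(λ) = −(wᴴB₂y)/(wᴴB₃y)`. -/
theorem derivative_of_g_closed_form
    (m : ℕ) (B₁ B₂ B₃ : Matrix (Fin m) (Fin m) ℂ)
    (lam : ℂ) (g : ℂ → ℂ) (Y : ℂ → (Fin m → ℂ))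
    (hg : AnalyticAt ℂ g lam) (hY : AnalyticAt ℂ Y lam)
    (hsol : ∀ᶠ s in nhds lam, (B₁ + s • B₂ + g s • B₃) *ᵥ (Y s) = 0)
    (w : Fin m → ℂ)
    (hw : (star w) ᵥ* (B₁ + lam • B₂ + g lam • B₃) = 0)
    (hw3 : (star w) ⬝ᵥ (B₃ *ᵥ (Y lam)) ≠ 0) :
    deriv g lam
      = -(((star w) ⬝ᵥ (B₂ *ᵥ (Y lam))) / ((star w) ⬝ᵥ (B₃ *ᵥ (Y lam)))) := by
  classical
  -- continuous linear functionals v ↦ wᴴ (A v)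
  let L : Matrix (Fin m) (Fin m) ℂ → ((Fin m → ℂ) →L[ℂ] ℂ) := fun A =>
    LinearMap.toContinuousLinearMap
      { toFun := fun v => (star w) ⬝ᵥ (A *ᵥ v)
        map_add' := by
          intro x y
          simp [Matrix.mulVec_add, dotProduct_add]
        map_smul' := by
          intro c x
          simp [Matrix.mulVec_smul, dotProduct_smul] }
  have hLapp : ∀ A v, L A v = (star w) ⬝ᵥ (A *ᵥ v) := fun A v => rfl
  set y := Y lam with hy
  set y' := deriv Y lam with hy'
  have hYd : HasDerivAt Y y' lam := (hY.differentiableAt).hasDerivAt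
  have hgd : HasDerivAt g (deriv g lam) lam := (hg.differentiableAt).hasDerivAt
  have h1 : HasDerivAt (fun s => L B₁ (Y s)) (L B₁ y') lam :=
    ((L B₁).hasFDerivAt.comp_hasDerivAt lam hYd)
  have h2 : HasDerivAt (fun s => L B₂ (Y s)) (L B₂ y') lam :=
    ((L B₂).hasFDerivAt.comp_hasDerivAt lam hYd)
  have h3 : HasDerivAt (fun s => L B₃ (Y s)) (L B₃ y') lam :=
    ((L B₃).hasFDerivAt.comp_hasDerivAt lam hYd)
  have hφ : HasDerivAt (fun s => L B₁ (Y s) + s * L B₂ (Y s) + g s * L B₃ (Y s))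
      (L B₁ y' + (1 * L B₂ y + lam * L B₂ y') + (deriv g lam * L B₃ y + g lam * L B₃ y'))
      lam :=
    (h1.add ((hasDerivAt_id lam).mul h2)).add (hgd.mul h3)
  -- the function is eventually zero
  have hzero : (fun s => L B₁ (Y s) + s * L B₂ (Y s) + g s * L B₃ (Y s)) =ᶠ[nhds lam]
      (fun _ => (0 : ℂ)) := by
    filter_upwards [hsol] with s hs
    have : (star w) ⬝ᵥ ((B₁ + s • B₂ + g s • B₃) *ᵥ (Y s)) = 0 := by
      rw [hs]; simp
    simpa [hLapp, Matrix.add_mulVec, Matrix.smul_mulVec, dotProduct_add,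
      dotProduct_smul, smul_eq_mul, mul_add, mul_comm] using this
  have hderiv0 : deriv (fun s => L B₁ (Y s) + s * L B₂ (Y s) + g s * L B₃ (Y s)) lam = 0 := by
    rw [hzero.deriv_eq]; simp
  have hD : L B₁ y' + (1 * L B₂ y + lam * L B₂ y') + (deriv g lam * L B₃ y + g lam * L B₃ y')
      = 0 := by
    rw [← hφ.deriv]; exact hderiv0
  -- the Y' terms vanish thanks to the left eigenvector
  have hwz : L B₁ y' + lam * L B₂ y' + g lam * L B₃ y' = 0 := by
    have : (star w) ⬝ᵥ ((B₁ + lam • B₂ + g lam • B₃) *ᵥ y') = 0 := by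
      rw [Matrix.dotProduct_mulVec, hw]; simp
    simpa [hLapp, Matrix.add_mulVec, Matrix.smul_mulVec, dotProduct_add,
      dotProduct_smul, smul_eq_mul] using this
  have hmain : L B₂ y + deriv g lam * L B₃ y = 0 := by
    have := hD
    linear_combination hD - hwz
  have hL3 : L B₃ y ≠ 0 := by simpa [hLapp] using hw3
  have : deriv g lam = -(L B₂ y / L B₃ y) := by
    rw [← neg_div, eq_div_iff hL3]
    linear_combination hmain
  simpa [hLapp] using this
end

section
/- Let W, V ∈ ℂ^{n×p} and suppose the quadruple (λ,z,μ,y) ∈ ℂ × ℂᵖ × ℂ × ℂᵐ is such that cᵀy = 1 and the Jacobian J(λ,μ,y) is invertible. Then (λ,z,μ,y) solves the projected two-parameter eigenvalue problem Wᵀ(A₁ + λA₂ + μA₃)Vz = 0 and (B₁ + λB₂ + μB₃)y = 0, if and only if there exist functions g : ℂ → ℂ and Y : ℂ → ℂᵐ, analytic at λ, with g(λ) = μ and Y(λ) = y, such that B(s,g(s))Y(s) = 0 and cᵀY(s) = 1 for all s in some neighborhood of λ, and (WᵀA₁V + λ WᵀA₂V + g(λ) WᵀA₃V)z = 0. -/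
/-!
The normalized eigenpairs `(Y, μ)` of `B(s, ·)` form the zero set of a polynomial map in
`(s, Y, μ)` whose partial derivative in `(Y, μ)` at `(λ, y, μ)` is the bordered matrix `J(λ, μ, y)`.
When `J` is invertible, the analytic implicit function theorem produces the branch `s ↦ (Y s, g s)`
through `(y, μ)`. The projected equation is linear in the parameters, so `Wᵀ A(λ, μ) V` splits as
`WᵀA₁V + λ WᵀA₂V + μ WᵀA₃V`, and `g λ = μ` makes the two formulations agree.
-/

open Filter Topology Matrix
open scoped ContDiff

theorem fderiv_apply_eq_of_quadratic_along_line {𝕜 E F : Type*} [NontriviallyNormedField 𝕜]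
    [NormedAddCommGroup E] [NormedSpace 𝕜 E] [NormedAddCommGroup F] [NormedSpace 𝕜 F]
    {f : E → F} {x v : E} {a b : F} (hf : DifferentiableAt 𝕜 f x)
    (hline : ∀ t : 𝕜, f (x + t • v) = f x + t • a + t ^ 2 • b) : fderiv 𝕜 f x v = a := by
  have hcomp : HasDerivAt (fun t : 𝕜 => f (x + t • v)) (fderiv 𝕜 f x v) 0 := by
    have hcurve : HasDerivAt (fun t : 𝕜 => x + t • v) v 0 := by
      simpa using ((hasDerivAt_id (0 : 𝕜)).smul_const v).const_add x
    exact hf.hasFDerivAt.comp_hasDerivAt_of_eq (0 : 𝕜) hcurve (by simp)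
  have hpoly : HasDerivAt (fun t : 𝕜 => f x + t • a + t ^ 2 • b) a 0 := by
    simpa using (((hasDerivAt_id (0 : 𝕜)).smul_const a).const_add (f x)).fun_add
      ((hasDerivAt_pow 2 (0 : 𝕜)).smul_const b)
  exact hcomp.unique (by simpa only [hline] using hpoly)

theorem ContinuousLinearMap.isInvertible_of_injective {𝕜 E : Type*} [NontriviallyNormedField 𝕜]
    [CompleteSpace 𝕜] [NormedAddCommGroup E] [NormedSpace 𝕜 E] [FiniteDimensional 𝕜 E]
    (f : E →L[𝕜] E) (hf : Function.Injective f) : f.IsInvertible :=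
  ⟨(LinearEquiv.ofInjectiveEndo f.toLinearMap hf).toContinuousLinearEquiv, rfl⟩

theorem AnalyticAt.exists_implicitFunction {𝕜 E₁ E₂ F : Type*} [RCLike 𝕜]
    [NormedAddCommGroup E₁] [NormedSpace 𝕜 E₁] [CompleteSpace E₁]
    [NormedAddCommGroup E₂] [NormedSpace 𝕜 E₂] [CompleteSpace E₂]
    [NormedAddCommGroup F] [NormedSpace 𝕜 F] [CompleteSpace F]
    {f : E₁ × E₂ → F} {u : E₁ × E₂} (hf : AnalyticAt 𝕜 f u)
    (hinv : (fderiv 𝕜 f u ∘L .inr 𝕜 E₁ E₂).IsInvertible) :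
    ∃ ψ : E₁ → E₂, AnalyticAt 𝕜 ψ u.1 ∧ ψ u.1 = u.2 ∧ ∀ᶠ x in 𝓝 u.1, f (x, ψ x) = f u := by
  have hω : ContDiffAt 𝕜 ω f u := hf.contDiffAt
  exact ⟨hω.implicitFunction (by simp) hinv, (hω.contDiffAt_implicitFunction _ hinv).analyticAt,
    hω.implicitFunction_apply_self _ hinv, hω.eventually_apply_implicitFunction _ hinv⟩

section EigenResidual

variable {𝕜 ι : Type*} [RCLike 𝕜] [Fintype ι] (B₁ B₂ B₃ : Matrix ι ι 𝕜) (c : ι → 𝕜)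

/-- The normalized eigenpairs `(Y, μ)` of `B(s, ·)` are the solutions of
`eigenResidual B₁ B₂ B₃ c (s, (Y, μ)) = (0, 1)`. -/
def eigenResidual (p : 𝕜 × ((ι → 𝕜) × 𝕜)) : (ι → 𝕜) × 𝕜 :=
  ((B₁ + p.1 • B₂ + p.2.2 • B₃) *ᵥ p.2.1, c ⬝ᵥ p.2.1)

theorem contDiff_eigenResidual : ContDiff 𝕜 ω (eigenResidual B₁ B₂ B₃ c) := by
  have hY : ContDiff 𝕜 ω fun p : 𝕜 × ((ι → 𝕜) × 𝕜) => p.2.1 := contDiff_fst.comp contDiff_snd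
  rw [contDiff_pi] at hY
  refine ContDiff.prodMk (contDiff_pi.2 fun i => ?_) ?_ <;>
    simp only [mulVec, dotProduct, Matrix.add_apply, Matrix.smul_apply, smul_eq_mul] <;> fun_prop

theorem fderiv_eigenResidual_inr (s μ ν : 𝕜) (y w : ι → 𝕜) :
    fderiv 𝕜 (eigenResidual B₁ B₂ B₃ c) (s, (y, μ)) (0, (w, ν)) =
      ((B₁ + s • B₂ + μ • B₃) *ᵥ w + ν • (B₃ *ᵥ y), c ⬝ᵥ w) := by
  refine fderiv_apply_eq_of_quadratic_along_line (b := (ν • (B₃ *ᵥ w), 0))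
    ((contDiff_eigenResidual B₁ B₂ B₃ c).differentiable (by simp) _) fun t => ?_
  simp only [eigenResidual, Prod.smul_mk, Prod.mk_add_mk, smul_zero, add_zero, Prod.mk.injEq,
    add_mulVec, mulVec_add, smul_mulVec, mulVec_smul, dotProduct_add, dotProduct_smul]
  exact ⟨by module, trivial⟩

theorem isInvertible_fderiv_eigenResidual_comp_inr [DecidableEq ι] (s μ : 𝕜) (y : ι → 𝕜)
    (hJ : IsUnit (fromBlocks (B₁ + s • B₂ + μ • B₃)
        (replicateCol (Fin 1) (B₃ *ᵥ y)) (replicateRow (Fin 1) c) 0)) :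
    (fderiv 𝕜 (eigenResidual B₁ B₂ B₃ c) (s, (y, μ)) ∘L .inr 𝕜 _ _).IsInvertible := by
  refine ContinuousLinearMap.isInvertible_of_injective _ ?_
  rw [injective_iff_map_eq_zero]
  rintro ⟨w, ν⟩ hwν
  rw [ContinuousLinearMap.comp_apply, ContinuousLinearMap.inr_apply, fderiv_eigenResidual_inr,
    Prod.mk_eq_zero] at hwν
  have hker : fromBlocks (B₁ + s • B₂ + μ • B₃) (replicateCol (Fin 1) (B₃ *ᵥ y))
      (replicateRow (Fin 1) c) 0 *ᵥ Sum.elim w (fun _ => ν) = 0 := by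
    ext (i | i)
    · simpa [fromBlocks_mulVec, mulVec, dotProduct, mul_comm] using congrFun hwν.1 i
    · simp [fromBlocks_mulVec, replicateRow_mulVec_eq_const, hwν.2]
  have hzero := mulVec_injective_iff_isUnit.2 hJ (hker.trans (mulVec_zero _).symm)
  exact Prod.ext (funext fun i => congrFun hzero (.inl i)) (congrFun hzero (.inr 0))

theorem exists_analytic_eigenpair_branch [DecidableEq ι] (lam μ : 𝕜) (y : ι → 𝕜)
    (hc : c ⬝ᵥ y = 1) (hB : (B₁ + lam • B₂ + μ • B₃) *ᵥ y = 0)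
    (hJ : IsUnit (fromBlocks (B₁ + lam • B₂ + μ • B₃)
        (replicateCol (Fin 1) (B₃ *ᵥ y)) (replicateRow (Fin 1) c) 0)) :
    ∃ (g : 𝕜 → 𝕜) (Y : 𝕜 → ι → 𝕜),
      AnalyticAt 𝕜 g lam ∧ AnalyticAt 𝕜 Y lam ∧ g lam = μ ∧ Y lam = y ∧
      ∀ᶠ s in 𝓝 lam, (B₁ + s • B₂ + g s • B₃) *ᵥ Y s = 0 ∧ c ⬝ᵥ Y s = 1 := by
  obtain ⟨ψ, hψ, hψlam, hψeq⟩ := (contDiff_eigenResidual B₁ B₂ B₃ c).contDiffAt.analyticAt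
    |>.exists_implicitFunction (isInvertible_fderiv_eigenResidual_comp_inr B₁ B₂ B₃ c lam μ y hJ)
  refine ⟨fun s => (ψ s).2, fun s => (ψ s).1, analyticAt_snd.comp hψ, analyticAt_fst.comp hψ,
    congrArg Prod.snd hψlam, congrArg Prod.fst hψlam, hψeq.mono fun s hs => ?_⟩
  simpa [eigenResidual, hB, hc] using hs

end EigenResidual

/-- **Projected nonlinearized problem.**
Let `W, V ∈ ℂ^{n×p}` and suppose `(λ,z,μ,y)` is such that `cᵀy = 1` and the Jacobian
`J(λ,μ,y)` is invertible.  Then `(λ,z,μ,y)` solves the projected two-parameter eigenvalue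
problem `Wᵀ(A₁+λA₂+μA₃)Vz = 0`, `(B₁+λB₂+μB₃)y = 0`, iff there exist functions `g, Y`
analytic at `λ`, with `g(λ) = μ`, `Y(λ) = y`, satisfying `B(s,g(s))Y(s) = 0`, `cᵀY(s) = 1`
near `λ`, and `(WᵀA₁V + λWᵀA₂V + g(λ)WᵀA₃V)z = 0`. -/
theorem projected_nonlinearized_problem
    (n m p : ℕ) (A₁ A₂ A₃ : Matrix (Fin n) (Fin n) ℂ)
    (B₁ B₂ B₃ : Matrix (Fin m) (Fin m) ℂ) (c : Fin m → ℂ)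
    (W V : Matrix (Fin n) (Fin p) ℂ)
    (lam μ : ℂ) (z : Fin p → ℂ) (y : Fin m → ℂ)
    (hc : c ⬝ᵥ y = 1)
    (hJ : IsUnit (Matrix.fromBlocks (B₁ + lam • B₂ + μ • B₃)
        (Matrix.replicateCol (Fin 1) (B₃ *ᵥ y)) (Matrix.replicateRow (Fin 1) c) 0)) :
    ((Wᵀ * (A₁ + lam • A₂ + μ • A₃) * V) *ᵥ z = 0 ∧
      (B₁ + lam • B₂ + μ • B₃) *ᵥ y = 0)
    ↔
    (∃ (g : ℂ → ℂ) (Y : ℂ → (Fin m → ℂ)),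
      AnalyticAt ℂ g lam ∧ AnalyticAt ℂ Y lam ∧
      g lam = μ ∧ Y lam = y ∧
      (∀ᶠ s in nhds lam,
        (B₁ + s • B₂ + g s • B₃) *ᵥ (Y s) = 0 ∧ c ⬝ᵥ (Y s) = 1) ∧
      (Wᵀ * A₁ * V + lam • (Wᵀ * A₂ * V) + g lam • (Wᵀ * A₃ * V)) *ᵥ z = 0) := by
  have hproj : Wᵀ * (A₁ + lam • A₂ + μ • A₃) * V =
      Wᵀ * A₁ * V + lam • (Wᵀ * A₂ * V) + μ • (Wᵀ * A₃ * V) := by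
    simp only [Matrix.mul_add, Matrix.add_mul, Matrix.mul_smul, Matrix.smul_mul]
  rw [hproj]
  constructor
  · rintro ⟨hz, hB⟩
    obtain ⟨g, Y, hg, hY, hgμ, hYy, hbranch⟩ :=
      exists_analytic_eigenpair_branch B₁ B₂ B₃ c lam μ y hc hB hJ
    exact ⟨g, Y, hg, hY, hgμ, hYy, hbranch, hgμ ▸ hz⟩
  · rintro ⟨g, Y, -, -, rfl, rfl, hbranch, hz⟩
    exact ⟨hz, hbranch.self_of_nhds.1⟩
end

section
/- Let v, w ∈ ℂⁿ with wᵀA₃v ≠ 0, and let λ, μ ∈ ℂ and y ∈ ℂᵐ satisfy wᵀ(A₁ + λA₂ + μA₃)v = 0 and (B₁ + λB₂ + μB₃)y = 0. Then y and λ satisfy the generalized eigenvalue problem ((wᵀA₃v)B₁ − (wᵀA₁v)B₃)y = λ((wᵀA₂v)B₃ − (wᵀA₃v)B₂)y, and μ is given by μ = −(wᵀA₁v + λ wᵀA₂v)/(wᵀA₃v). -/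
open Matrix

/-- **The scalar (`p = 1`) projected problem as a generalized eigenvalue problem.**
Let `v, w ∈ ℂⁿ` with `wᵀA₃v ≠ 0`, and let `λ, μ, y` satisfy `wᵀ(A₁+λA₂+μA₃)v = 0` and
`(B₁+λB₂+μB₃)y = 0`.  Then `((wᵀA₃v)B₁ − (wᵀA₁v)B₃)y = λ((wᵀA₂v)B₃ − (wᵀA₃v)B₂)y` and
`μ = −(wᵀA₁v + λwᵀA₂v)/(wᵀA₃v)`. -/
theorem scalar_projected_problem_gep
    (n m : ℕ) (A₁ A₂ A₃ : Matrix (Fin n) (Fin n) ℂ)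
    (B₁ B₂ B₃ : Matrix (Fin m) (Fin m) ℂ)
    (v w : Fin n → ℂ) (lam μ : ℂ) (y : Fin m → ℂ)
    (h3 : w ⬝ᵥ (A₃ *ᵥ v) ≠ 0)
    (hA : w ⬝ᵥ ((A₁ + lam • A₂ + μ • A₃) *ᵥ v) = 0)
    (hB : (B₁ + lam • B₂ + μ • B₃) *ᵥ y = 0) :
    ((w ⬝ᵥ (A₃ *ᵥ v)) • B₁ - (w ⬝ᵥ (A₁ *ᵥ v)) • B₃) *ᵥ y
      = lam • ((((w ⬝ᵥ (A₂ *ᵥ v)) • B₃ - (w ⬝ᵥ (A₃ *ᵥ v)) • B₂)) *ᵥ y) ∧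
    μ = -((w ⬝ᵥ (A₁ *ᵥ v) + lam * (w ⬝ᵥ (A₂ *ᵥ v))) / (w ⬝ᵥ (A₃ *ᵥ v))) := by
  set a1 := w ⬝ᵥ (A₁ *ᵥ v) with ha1
  set a2 := w ⬝ᵥ (A₂ *ᵥ v) with ha2
  set a3 := w ⬝ᵥ (A₃ *ᵥ v) with ha3
  have hA' : a1 + lam * a2 + μ * a3 = 0 := by
    simpa [add_mulVec, smul_mulVec, dotProduct_add, dotProduct_smul, smul_eq_mul,
      ha1, ha2, ha3] using hA
  have hB' : B₁ *ᵥ y + lam • (B₂ *ᵥ y) + μ • (B₃ *ᵥ y) = 0 := by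
    simpa [add_mulVec, smul_mulVec] using hB
  constructor
  · funext i
    have h := congrFun hB' i
    simp only [Pi.add_apply, Pi.smul_apply, Pi.zero_apply, smul_eq_mul] at h
    simp only [sub_mulVec, smul_mulVec, Pi.sub_apply, Pi.smul_apply, smul_eq_mul]
    linear_combination a3 * h - (B₃ *ᵥ y) i * hA'
  · field_simp
    linear_combination hA'
end
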